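/- arXiv:1702.03871 — 5 statements merged into one kernel-verified Lean document; each statement's English description precedes it below -/
import Mathlib

section
/- Let 0 < R ≤ ∞ and let φ be a quasiconcave function on [0,R), with complementary function φ̃ defined by φ̃(t) = t/φ(t) for t ∈ (0,R) and φ̃(0) = 0. Then the following three conditions are equivalent: (i) there is a constant C > 0 such that ∫₀ᵗ ds/φ(s) ≤ C · t/φ(t) for all t ∈ (0,R) (the B-condition); (ii) there is a constant C > 0 such that ∫₀ᵗ φ̃(s)/s ds ≤ C · φ̃(t) for all t ∈ (0,R); (iii) there exists a constant c ∈ (0,1) such that inf_{0<t<R} φ̃(t)/φ̃(ct) > 1. -/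
open MeasureTheory Set ENNReal Filter

noncomputable section

/-- The open interval `(0, R)` inside `ℝ`, where `R ∈ (0, ∞]` is an extended real. -/
def DomIoo (R : ℝ≥0∞) : Set ℝ := {t : ℝ | 0 < t ∧ ENNReal.ofReal t < R}

/-- The part of `(0, R)` lying strictly above `t`. -/
def DomAbove (R : ℝ≥0∞) (t : ℝ) : Set ℝ := {s : ℝ | t < s ∧ ENNReal.ofReal s < R}

/-- `φ : [0, R) → [0, ∞)` is quasiconcave: it vanishes exactly at `0`, is nondecreasing,
and `t ↦ φ(t)/t` is nonincreasing on `(0, R)`.  (Values on `(0, R)` are finite.) -/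
def QuasiConcaveOn (R : ℝ≥0∞) (φ : ℝ → ℝ≥0∞) : Prop :=
  φ 0 = 0 ∧
  (∀ t ∈ DomIoo R, 0 < φ t ∧ φ t < ⊤) ∧
  (∀ s t : ℝ, 0 ≤ s → s ≤ t → t ∈ DomIoo R → φ s ≤ φ t) ∧
  (∀ s t : ℝ, s ∈ DomIoo R → s ≤ t → t ∈ DomIoo R →
    φ t / ENNReal.ofReal t ≤ φ s / ENNReal.ofReal s)

/-- `f` is a nonnegative nonincreasing measurable function on `(0, R)`
(nonnegativity is built into the codomain `[0, ∞]`). -/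
def NonincOn (R : ℝ≥0∞) (f : ℝ → ℝ≥0∞) : Prop :=
  Measurable f ∧ ∀ s t : ℝ, s ∈ DomIoo R → s ≤ t → t ∈ DomIoo R → f t ≤ f s

/-- The level function `f**(t) = (1/t) ∫₀ᵗ f(s) ds`. -/
def dstar (f : ℝ → ℝ≥0∞) (t : ℝ) : ℝ≥0∞ :=
  (∫⁻ s in Ioo (0 : ℝ) t, f s) / ENNReal.ofReal t

/-- The supremum operator `S_φ f(t) = (1/φ(t)) ⋅ sup_{0<s<t} φ(s) f(s)`. -/
def Ssup (φ f : ℝ → ℝ≥0∞) (t : ℝ) : ℝ≥0∞ :=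
  (⨆ s ∈ Ioo (0 : ℝ) t, φ s * f s) / φ t

/-- The supremum operator `T_ψ f(t) = (1/ψ(t)) ⋅ sup_{t<s<R} ψ(s) f(s)`. -/
def Tsup (R : ℝ≥0∞) (ψ f : ℝ → ℝ≥0∞) (t : ℝ) : ℝ≥0∞ :=
  (⨆ s ∈ DomAbove R t, ψ s * f s) / ψ t

/-- The `B`-condition: `∫₀ᵗ ds/φ(s) ≤ C ⋅ t/φ(t)` on `(0, R)` for some constant `C > 0`. -/
def BCond (R : ℝ≥0∞) (φ : ℝ → ℝ≥0∞) : Prop :=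
  ∃ C : ℝ, 0 < C ∧ ∀ t ∈ DomIoo R,
    (∫⁻ s in Ioo (0 : ℝ) t, 1 / φ s) ≤ ENNReal.ofReal C * (ENNReal.ofReal t / φ t)

/-- A weight on `(0, R)`: positive, measurable and locally integrable
(with finite integral near the origin). -/
def IsWeight (R : ℝ≥0∞) (w : ℝ → ℝ≥0∞) : Prop :=
  Measurable w ∧ (∀ t ∈ DomIoo R, 0 < w t ∧ w t < ⊤) ∧
  ∀ t ∈ DomIoo R, (∫⁻ s in Ioo (0 : ℝ) t, w s) < ⊤

/-- Nontriviality of a weight `w` for the exponent `p`: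
`∫₁^∞ s^{-p} w(s) ds < ∞` when `R = ∞`, and `∫₀ᴿ s^{-p} w(s) ds = ∞` when `R < ∞`. -/
def Nontriv (R : ℝ≥0∞) (p : ℝ) (w : ℝ → ℝ≥0∞) : Prop :=
  (R = ⊤ → (∫⁻ s in Ioi (1 : ℝ), ENNReal.ofReal s ^ (-p) * w s) < ⊤) ∧
  (R ≠ ⊤ → (∫⁻ s in DomIoo R, ENNReal.ofReal s ^ (-p) * w s) = ⊤)

/-!
Write `φ̃(t) = t / φ(t)` (`complementary φ`). It is nondecreasing because `φ(s)/s` is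
nonincreasing, and `1/φ(s) = φ̃(s)/s`, so (i) and (ii) are the same condition.

(i) ⇒ (iii): on `(ct, t)` we have `1/φ(s) ≥ φ̃(ct)/s`, hence
`φ̃(ct) log(1/c) ≤ ∫₀ᵗ ds/φ(s) ≤ C φ̃(t)`, and `c = e^{-2C}` gives `φ̃(t) ≥ 2 φ̃(ct)`.

(iii) ⇒ (i): if `q φ̃(ct) ≤ φ̃(t)` with `q > 1`, cut `(0, t)` into the pieces `(cⁿ⁺¹t, cⁿt]`.
Since `φ` is nondecreasing, the piece contributes at most
`φ̃(cⁿ⁺¹t) (1 - c)/c ≤ q⁻ⁿ⁻¹ φ̃(t) (1 - c)/c` to `∫₀ᵗ ds/φ(s)`, and these sum to a geometric series.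
-/

def complementary (φ : ℝ → ℝ≥0∞) (t : ℝ) : ℝ≥0∞ := ENNReal.ofReal t / φ t

lemma mul_mem_domIoo {R : ℝ≥0∞} {c t : ℝ} (ht : t ∈ DomIoo R) (hc0 : 0 < c) (hc1 : c ≤ 1) :
    c * t ∈ DomIoo R :=
  ⟨mul_pos hc0 ht.1, (ENNReal.ofReal_le_ofReal (mul_le_of_le_one_left ht.1.le hc1)).trans_lt ht.2⟩

lemma mem_domIoo_of_le {R : ℝ≥0∞} {s t : ℝ} (ht : t ∈ DomIoo R) (hs : 0 < s) (hst : s ≤ t) :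
    s ∈ DomIoo R :=
  ⟨hs, (ENNReal.ofReal_le_ofReal hst).trans_lt ht.2⟩

lemma Ioo_zero_subset_iUnion_Ioc_pow_mul {c t : ℝ} (hc0 : 0 < c) (hc1 : c < 1) (ht : 0 < t) :
    Ioo 0 t ⊆ ⋃ n : ℕ, Ioc (c ^ (n + 1) * t) (c ^ n * t) := by
  intro s hs
  obtain ⟨n, hlt, hle⟩ :=
    exists_nat_pow_near_of_lt_one (div_pos hs.1 ht) ((div_le_one ht).2 hs.2.le) hc0 hc1
  exact mem_iUnion.2 ⟨n, (lt_div_iff₀ ht).1 hlt, (div_le_iff₀ ht).1 hle⟩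

lemma lintegral_Ioo_inv {a b : ℝ} (ha : 0 < a) (hab : a ≤ b) :
    ∫⁻ s in Ioo a b, ENNReal.ofReal s⁻¹ = ENNReal.ofReal (Real.log (b / a)) := by
  have hinv : ContinuousOn (fun s : ℝ => s⁻¹) (Icc a b) :=
    continuousOn_inv₀.mono fun s hs => (ha.trans_le hs.1).ne'
  rw [← integral_inv_of_pos ha (ha.trans_le hab), intervalIntegral.integral_of_le hab,
    integral_Ioc_eq_integral_Ioo, ofReal_integral_eq_lintegral_ofReal
      (hinv.integrableOn_Icc.mono_set Ioo_subset_Icc_self)]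
  filter_upwards [ae_restrict_mem measurableSet_Ioo] with s hs
  exact inv_nonneg.2 (ha.trans hs.1).le

lemma complementary_eq_inv_div {φ : ℝ → ℝ≥0∞} {t : ℝ} (ht : 0 < t) :
    complementary φ t = (φ t / ENNReal.ofReal t)⁻¹ :=
  (ENNReal.inv_div (Or.inl ENNReal.ofReal_ne_top)
    (Or.inl (ENNReal.ofReal_pos.2 ht).ne')).symm

lemma one_div_eq_complementary_mul {φ : ℝ → ℝ≥0∞} {s : ℝ} (hs : 0 < s) :
    1 / φ s = complementary φ s * ENNReal.ofReal s⁻¹ := by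
  rw [ENNReal.ofReal_inv_of_pos hs, complementary, div_eq_mul_inv (ENNReal.ofReal s),
    mul_right_comm, ENNReal.mul_inv_cancel (ENNReal.ofReal_pos.2 hs).ne' ENNReal.ofReal_ne_top,
    one_mul, one_div]

lemma bCond_of_le_mul {R : ℝ≥0∞} {φ : ℝ → ℝ≥0∞} {K : ℝ≥0∞} (hK : K ≠ ⊤)
    (h : ∀ t ∈ DomIoo R, ∫⁻ s in Ioo 0 t, 1 / φ s ≤ K * complementary φ t) : BCond R φ := by
  refine ⟨K.toReal + 1, by positivity, fun t ht => (h t ht).trans (mul_le_mul_left ?_ _)⟩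
  calc K = ENNReal.ofReal K.toReal := (ENNReal.ofReal_toReal hK).symm
    _ ≤ ENNReal.ofReal (K.toReal + 1) := ENNReal.ofReal_le_ofReal (by linarith)

lemma pow_mul_le_of_mul_le {R : ℝ≥0∞} {g : ℝ → ℝ≥0∞} {c : ℝ} {r : ℝ≥0∞} (hc0 : 0 < c)
    (hc1 : c ≤ 1) (h : ∀ t ∈ DomIoo R, g (c * t) ≤ r * g t) (n : ℕ) {t : ℝ}
    (ht : t ∈ DomIoo R) : g (c ^ n * t) ≤ r ^ n * g t := by
  induction n with
  | zero => simp
  | succ n ih =>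
    calc g (c ^ (n + 1) * t) = g (c * (c ^ n * t)) := by ring_nf
      _ ≤ r * g (c ^ n * t) := h _ (mul_mem_domIoo ht (pow_pos hc0 n) (pow_le_one₀ hc0.le hc1))
      _ ≤ r * (r ^ n * g t) := by gcongr
      _ = r ^ (n + 1) * g t := by ring

namespace QuasiConcaveOn

variable {R : ℝ≥0∞} {φ : ℝ → ℝ≥0∞} (hφ : QuasiConcaveOn R φ)
include hφ

lemma complementary_ne_zero {t : ℝ} (ht : t ∈ DomIoo R) : complementary φ t ≠ 0 := by
  simp [complementary, ENNReal.div_eq_zero_iff, ht.1, (hφ.2.1 t ht).2.ne]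

lemma complementary_ne_top {t : ℝ} (ht : t ∈ DomIoo R) : complementary φ t ≠ ⊤ := by
  simp [complementary, ENNReal.div_eq_top, (hφ.2.1 t ht).1.ne']

lemma complementary_mono {a b : ℝ} (ha : a ∈ DomIoo R) (hab : a ≤ b) (hb : b ∈ DomIoo R) :
    complementary φ a ≤ complementary φ b := by
  rw [complementary_eq_inv_div ha.1, complementary_eq_inv_div hb.1]
  exact ENNReal.inv_le_inv.2 (hφ.2.2.2 a b ha hab hb)

lemma setLIntegral_Ioc_one_div_le {x y : ℝ} (hx : 0 < x) (hy : y ∈ DomIoo R) :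
    ∫⁻ s in Ioc x y, 1 / φ s ≤ complementary φ x * ENNReal.ofReal ((y - x) / x) := by
  calc ∫⁻ s in Ioc x y, 1 / φ s ≤ ∫⁻ _ in Ioc x y, 1 / φ x := by
        refine setLIntegral_mono' measurableSet_Ioc fun s hs => ?_
        gcongr
        exact hφ.2.2.1 x s hx.le hs.1.le (mem_domIoo_of_le hy (hx.trans hs.1) hs.2)
    _ = complementary φ x * ENNReal.ofReal ((y - x) / x) := by
        rw [setLIntegral_const, Real.volume_Ioc, one_div_eq_complementary_mul hx, mul_assoc,
          ← ENNReal.ofReal_mul (inv_nonneg.2 hx.le), inv_mul_eq_div]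

lemma complementary_mul_log_le {a b : ℝ} (ha : 0 < a) (hab : a ≤ b) (hb : b ∈ DomIoo R) :
    complementary φ a * ENNReal.ofReal (Real.log (b / a)) ≤ ∫⁻ s in Ioo 0 b, 1 / φ s := by
  calc complementary φ a * ENNReal.ofReal (Real.log (b / a))
      = ∫⁻ s in Ioo a b, complementary φ a * ENNReal.ofReal s⁻¹ := by
        rw [lintegral_const_mul _ (by fun_prop), lintegral_Ioo_inv ha hab]
    _ ≤ ∫⁻ s in Ioo a b, 1 / φ s := by
        refine setLIntegral_mono' measurableSet_Ioo fun s hs => ?_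
        rw [one_div_eq_complementary_mul (ha.trans hs.1)]
        gcongr
        exact hφ.complementary_mono (mem_domIoo_of_le hb ha hab) hs.1.le
          (mem_domIoo_of_le hb (ha.trans hs.1) hs.2.le)
    _ ≤ ∫⁻ s in Ioo 0 b, 1 / φ s := lintegral_mono_set (Ioo_subset_Ioo_left ha.le)

theorem exists_lt_iInf_complementary_div_of_bCond (hB : BCond R φ) :
    ∃ c : ℝ, 0 < c ∧ c < 1 ∧
      1 < ⨅ t ∈ DomIoo R, complementary φ t / complementary φ (c * t) := by
  obtain ⟨C, hC0, hC⟩ := hB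
  set c := Real.exp (-(2 * C))
  have hc0 : 0 < c := Real.exp_pos _
  have hc1 : c < 1 := Real.exp_lt_one_iff.2 (by linarith)
  have hdouble : ∀ t ∈ DomIoo R, 2 * complementary φ (c * t) ≤ complementary φ t := by
    intro t ht
    have hlog : Real.log (t / (c * t)) = 2 * C := by
      rw [div_mul_cancel_right₀ ht.1.ne', Real.log_inv, Real.log_exp, neg_neg]
    refine (ENNReal.mul_le_mul_iff_right (ENNReal.ofReal_pos.2 hC0).ne' ENNReal.ofReal_ne_top).1 ?_
    calc ENNReal.ofReal C * (2 * complementary φ (c * t))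
        = complementary φ (c * t) * ENNReal.ofReal (Real.log (t / (c * t))) := by
          rw [hlog, ENNReal.ofReal_mul zero_le_two, ENNReal.ofReal_ofNat]
          ring
      _ ≤ ∫⁻ s in Ioo 0 t, 1 / φ s :=
          hφ.complementary_mul_log_le (mul_pos hc0 ht.1) (mul_le_of_le_one_left ht.1.le hc1.le) ht
      _ ≤ ENNReal.ofReal C * complementary φ t := hC t ht
  refine ⟨c, hc0, hc1, ENNReal.one_lt_two.trans_le (le_iInf₂ fun t ht => ?_)⟩
  have hct := mul_mem_domIoo ht hc0 hc1.le
  exact (ENNReal.le_div_iff_mul_le (Or.inl (hφ.complementary_ne_zero hct))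
    (Or.inl (hφ.complementary_ne_top hct))).2 (hdouble t ht)

theorem bCond_of_exists_lt_iInf_complementary_div
    (h : ∃ c : ℝ, 0 < c ∧ c < 1 ∧
      1 < ⨅ t ∈ DomIoo R, complementary φ t / complementary φ (c * t)) :
    BCond R φ := by
  obtain ⟨c, hc0, hc1, hI⟩ := h
  obtain ⟨q, hq1, hqI⟩ := exists_between hI
  have hq0 : q ≠ 0 := (zero_lt_one.trans hq1).ne'
  have hqtop : q ≠ ⊤ := (hqI.trans_le le_top).ne
  have hr1 : q⁻¹ < 1 := ENNReal.inv_lt_one.2 hq1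
  have hstep : ∀ t ∈ DomIoo R, complementary φ (c * t) ≤ q⁻¹ * complementary φ t := by
    intro t ht
    have hct := mul_mem_domIoo ht hc0 hc1.le
    have hq : q * complementary φ (c * t) ≤ complementary φ t :=
      (ENNReal.le_div_iff_mul_le (Or.inl (hφ.complementary_ne_zero hct))
        (Or.inl (hφ.complementary_ne_top hct))).1 (hqI.le.trans (iInf₂_le t ht))
    calc complementary φ (c * t) = q⁻¹ * (q * complementary φ (c * t)) := by
          rw [← mul_assoc, ENNReal.inv_mul_cancel hq0 hqtop, one_mul]
      _ ≤ q⁻¹ * complementary φ t := by gcongr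
  set K := ENNReal.ofReal ((1 - c) / c)
  refine bCond_of_le_mul (K := (1 - q⁻¹)⁻¹ * (q⁻¹ * K))
    (ENNReal.mul_ne_top (ENNReal.inv_ne_top.2 (tsub_pos_iff_lt.2 hr1).ne')
      (ENNReal.mul_ne_top hr1.ne_top ENNReal.ofReal_ne_top)) fun t ht => ?_
  have hpiece : ∀ n : ℕ, ∫⁻ s in Ioc (c ^ (n + 1) * t) (c ^ n * t), 1 / φ s ≤
      q⁻¹ ^ n * (q⁻¹ * K * complementary φ t) := by
    intro n
    have hcn : c ^ n * t ∈ DomIoo R :=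
      mul_mem_domIoo ht (pow_pos hc0 n) (pow_le_one₀ hc0.le hc1.le)
    calc ∫⁻ s in Ioc (c ^ (n + 1) * t) (c ^ n * t), 1 / φ s
        ≤ complementary φ (c ^ (n + 1) * t) *
            ENNReal.ofReal ((c ^ n * t - c ^ (n + 1) * t) / (c ^ (n + 1) * t)) :=
          hφ.setLIntegral_Ioc_one_div_le (by have := ht.1; positivity) hcn
      _ = complementary φ (c ^ (n + 1) * t) * K := by
          congr 2
          field_simp [ht.1.ne', hc0.ne']
          ring
      _ ≤ q⁻¹ ^ (n + 1) * complementary φ t * K := by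
          gcongr
          exact pow_mul_le_of_mul_le hc0 hc1.le hstep (n + 1) ht
      _ = q⁻¹ ^ n * (q⁻¹ * K * complementary φ t) := by ring
  calc ∫⁻ s in Ioo 0 t, 1 / φ s
      ≤ ∫⁻ s in ⋃ n : ℕ, Ioc (c ^ (n + 1) * t) (c ^ n * t), 1 / φ s :=
        lintegral_mono_set (Ioo_zero_subset_iUnion_Ioc_pow_mul hc0 hc1 ht.1)
    _ ≤ ∑' n : ℕ, ∫⁻ s in Ioc (c ^ (n + 1) * t) (c ^ n * t), 1 / φ s := lintegral_iUnion_le _ _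
    _ ≤ ∑' n : ℕ, q⁻¹ ^ n * (q⁻¹ * K * complementary φ t) := ENNReal.tsum_le_tsum hpiece
    _ = (1 - q⁻¹)⁻¹ * (q⁻¹ * K) * complementary φ t := by
        rw [ENNReal.tsum_mul_right, ENNReal.tsum_geometric]
        ring

theorem bCond_iff_exists_lt_iInf_complementary_div :
    BCond R φ ↔ ∃ c : ℝ, 0 < c ∧ c < 1 ∧
      1 < ⨅ t ∈ DomIoo R, complementary φ t / complementary φ (c * t) :=
  ⟨hφ.exists_lt_iInf_complementary_div_of_bCond, hφ.bCond_of_exists_lt_iInf_complementary_div⟩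

end QuasiConcaveOn

theorem statement0_general (R : ℝ≥0∞) (φ : ℝ → ℝ≥0∞)
    (hφ : QuasiConcaveOn R φ)
    (tilde : ℝ → ℝ≥0∞)
    (htilde : ∀ t ∈ DomIoo R, tilde t = ENNReal.ofReal t / φ t) :
    ((∃ C : ℝ, 0 < C ∧ ∀ t ∈ DomIoo R,
        (∫⁻ s in Ioo (0 : ℝ) t, 1 / φ s) ≤
          ENNReal.ofReal C * (ENNReal.ofReal t / φ t)) ↔
      (∃ C : ℝ, 0 < C ∧ ∀ t ∈ DomIoo R,
        (∫⁻ s in Ioo (0 : ℝ) t, tilde s / ENNReal.ofReal s) ≤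
          ENNReal.ofReal C * tilde t)) ∧
    ((∃ C : ℝ, 0 < C ∧ ∀ t ∈ DomIoo R,
        (∫⁻ s in Ioo (0 : ℝ) t, 1 / φ s) ≤
          ENNReal.ofReal C * (ENNReal.ofReal t / φ t)) ↔
      (∃ c : ℝ, 0 < c ∧ c < 1 ∧
        1 < ⨅ t ∈ DomIoo R, tilde t / tilde (c * t))) := by
  have hint : ∀ t ∈ DomIoo R,
      ∫⁻ s in Ioo 0 t, tilde s / ENNReal.ofReal s = ∫⁻ s in Ioo 0 t, 1 / φ s :=
    fun t ht => setLIntegral_congr_fun measurableSet_Ioo fun s hs => by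
      rw [htilde s (mem_domIoo_of_le ht hs.1 hs.2.le), one_div_eq_complementary_mul hs.1,
        div_eq_mul_inv, ENNReal.ofReal_inv_of_pos hs.1, complementary]
  have hinf : ∀ c : ℝ, 0 < c → c < 1 → ⨅ t ∈ DomIoo R, tilde t / tilde (c * t) =
      ⨅ t ∈ DomIoo R, complementary φ t / complementary φ (c * t) :=
    fun c hc0 hc1 => iInf_congr fun t => iInf_congr fun ht => by
      rw [htilde t ht, htilde _ (mul_mem_domIoo ht hc0 hc1.le), complementary, complementary]
  refine ⟨exists_congr fun C => and_congr_right fun _ => forall₂_congr fun t ht => ?_,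
    hφ.bCond_iff_exists_lt_iInf_complementary_div.trans (exists_congr fun c =>
      and_congr_right fun hc0 => and_congr_right fun hc1 => by rw [hinf c hc0 hc1])⟩
  rw [hint t ht, htilde t ht]

/-- Characterization of the `B`-condition: with `φ̃(t) = t/φ(t)` on `(0,R)`, `φ̃(0) = 0`,
the conditions (i) `∫₀ᵗ ds/φ(s) ≤ C ⋅ t/φ(t)`, (ii) `∫₀ᵗ φ̃(s)/s ds ≤ C ⋅ φ̃(t)` and
(iii) `∃ c ∈ (0,1)` with `inf_{0<t<R} φ̃(t)/φ̃(ct) > 1` are mutually equivalent. -/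
theorem statement0 (R : ℝ≥0∞) (hR : 0 < R) (φ : ℝ → ℝ≥0∞)
    (hφ : QuasiConcaveOn R φ)
    (tilde : ℝ → ℝ≥0∞) (htilde0 : tilde 0 = 0)
    (htilde : ∀ t ∈ DomIoo R, tilde t = ENNReal.ofReal t / φ t) :
    ((∃ C : ℝ, 0 < C ∧ ∀ t ∈ DomIoo R,
        (∫⁻ s in Ioo (0 : ℝ) t, 1 / φ s) ≤
          ENNReal.ofReal C * (ENNReal.ofReal t / φ t)) ↔
      (∃ C : ℝ, 0 < C ∧ ∀ t ∈ DomIoo R,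
        (∫⁻ s in Ioo (0 : ℝ) t, tilde s / ENNReal.ofReal s) ≤
          ENNReal.ofReal C * tilde t)) ∧
    ((∃ C : ℝ, 0 < C ∧ ∀ t ∈ DomIoo R,
        (∫⁻ s in Ioo (0 : ℝ) t, 1 / φ s) ≤
          ENNReal.ofReal C * (ENNReal.ofReal t / φ t)) ↔
      (∃ c : ℝ, 0 < c ∧ c < 1 ∧
        1 < ⨅ t ∈ DomIoo R, tilde t / tilde (c * t))) :=
  statement0_general R φ hφ tilde htilde
end
end

section
/- Let 0 < R ≤ ∞ and let φ be a quasiconcave function on [0,R). Then there exists a constant C > 0 such that sup_{0<t<R} φ(t) f**(t) ≤ C · sup_{0<t<R} φ(t) f(t) for every nonnegative nonincreasing measurable function f on (0,R) if and only if φ satisfies the B-condition. (The reverse inequality sup_{0<t<R} φ(t) f(t) ≤ sup_{0<t<R} φ(t) f**(t) holds always, since f ≤ f** for nonincreasing f.) -/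
open MeasureTheory Set ENNReal Filter

noncomputable section

/-!
The `B`-condition is exactly the inequality tested on `f = 1/φ` on `(0, t)` (and `0` after `t`):
there `sup φ f ≤ 1` while `φ(t) f**(t) = (φ(t)/t) ∫₀ᵗ ds/φ(s)`. Conversely, every `f` satisfies
`f ≤ (sup φ f)/φ` pointwise, and integrating this over `(0, t)` and applying the `B`-condition
bounds `φ(t) f**(t)`. The reverse inequality is `f(t) ≤ f**(t)`, as `f` is nonincreasing.
-/

theorem ENNReal.mul_div_le_iff_le_mul_div {p I T K : ℝ≥0∞} (hp0 : p ≠ 0) (hptop : p ≠ ⊤)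
    (hT0 : T ≠ 0) (hTtop : T ≠ ⊤) : p * (I / T) ≤ K ↔ I ≤ K * (T / p) := by
  rw [mul_comm, ← ENNReal.le_div_iff_mul_le (.inl hp0) (.inl hptop),
    ENNReal.div_le_iff hT0 hTtop, div_eq_mul_inv, div_eq_mul_inv, mul_right_comm, mul_assoc]

section

variable {R : ℝ≥0∞} {φ f : ℝ → ℝ≥0∞} {t : ℝ}

lemma mem_domIoo_of_mem_Ioo (ht : t ∈ DomIoo R) {s : ℝ} (hs : s ∈ Ioo 0 t) : s ∈ DomIoo R :=
  ⟨hs.1, (ENNReal.ofReal_le_ofReal hs.2.le).trans_lt ht.2⟩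

lemma ofReal_ne_zero_of_mem_domIoo (ht : t ∈ DomIoo R) : ENNReal.ofReal t ≠ 0 :=
  (ENNReal.ofReal_pos.2 ht.1).ne'

lemma le_dstar (hf : NonincOn R f) (ht : t ∈ DomIoo R) : f t ≤ dstar f t := by
  rw [dstar, ENNReal.le_div_iff_mul_le (.inl (ofReal_ne_zero_of_mem_domIoo ht))
    (.inl ENNReal.ofReal_ne_top)]
  calc f t * ENNReal.ofReal t = ∫⁻ _ in Ioo 0 t, f t := by
        rw [setLIntegral_const, Real.volume_Ioo, sub_zero]
    _ ≤ ∫⁻ s in Ioo 0 t, f s :=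
        setLIntegral_mono' measurableSet_Ioo fun s hs =>
          hf.2 s t (mem_domIoo_of_mem_Ioo ht hs) hs.2.le ht

lemma lintegral_Ioo_le_mul_lintegral_inv {M : ℝ≥0∞} (hM : M ≠ ⊤)
    (hφ : ∀ s ∈ Ioo 0 t, φ s ≠ 0) (hf : ∀ s ∈ Ioo 0 t, φ s * f s ≤ M) :
    ∫⁻ s in Ioo 0 t, f s ≤ M * ∫⁻ s in Ioo 0 t, 1 / φ s := by
  rw [← lintegral_const_mul' _ _ hM]
  refine setLIntegral_mono' measurableSet_Ioo fun s hs => ?_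
  rw [← mul_div_assoc, mul_one, ENNReal.le_div_iff_mul_le (.inl (hφ s hs)) (.inr hM), mul_comm]
  exact hf s hs

lemma iSup_mul_dstar_le_of_lintegral_inv_le {c : ℝ≥0∞} (hc : c ≠ 0)
    (hφ : ∀ t ∈ DomIoo R, φ t ≠ 0 ∧ φ t ≠ ⊤)
    (hB : ∀ t ∈ DomIoo R,
      ∫⁻ s in Ioo 0 t, 1 / φ s ≤ c * (ENNReal.ofReal t / φ t)) :
    ⨆ t ∈ DomIoo R, φ t * dstar f t ≤ c * ⨆ t ∈ DomIoo R, φ t * f t := by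
  set M := ⨆ t ∈ DomIoo R, φ t * f t
  by_cases hM : M = ⊤
  · rw [hM, ENNReal.mul_top hc]
    exact le_top
  refine iSup₂_le fun t ht => ?_
  have hφ' : ∀ s ∈ Ioo 0 t, φ s ≠ 0 := fun s hs => (hφ s (mem_domIoo_of_mem_Ioo ht hs)).1
  have hf : ∀ s ∈ Ioo 0 t, φ s * f s ≤ M := fun s hs =>
    le_iSup₂_of_le s (mem_domIoo_of_mem_Ioo ht hs) le_rfl
  rw [dstar, ENNReal.mul_div_le_iff_le_mul_div (hφ t ht).1 (hφ t ht).2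
    (ofReal_ne_zero_of_mem_domIoo ht) ENNReal.ofReal_ne_top]
  calc ∫⁻ s in Ioo 0 t, f s ≤ M * ∫⁻ s in Ioo 0 t, 1 / φ s :=
        lintegral_Ioo_le_mul_lintegral_inv hM hφ' hf
    _ ≤ M * (c * (ENNReal.ofReal t / φ t)) := mul_le_mul_right (hB t ht) M
    _ = c * M * (ENNReal.ofReal t / φ t) := by ring

lemma nonincOn_indicator_Ioo_inv (hφ : MonotoneOn φ (Ioo 0 t)) :
    NonincOn R ((Ioo 0 t).indicator fun s => (φ s)⁻¹) := by
  obtain ⟨g, hg, hφg⟩ := hφ.exists_monotone_extension (OrderBot.bddBelow _) (OrderTop.bddAbove _)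
  have hind : (Ioo 0 t).indicator (fun s => (φ s)⁻¹) = (Ioo 0 t).indicator fun s => (g s)⁻¹ :=
    indicator_congr fun s hs => by rw [hφg hs]
  rw [hind]
  refine ⟨hg.measurable.inv.indicator measurableSet_Ioo, fun a b ha hab hb => ?_⟩
  by_cases hbt : b < t
  · rw [indicator_of_mem (show b ∈ Ioo 0 t from ⟨hb.1, hbt⟩),
      indicator_of_mem (show a ∈ Ioo 0 t from ⟨ha.1, hab.trans_lt hbt⟩)]
    exact ENNReal.inv_le_inv.2 (hg hab)
  · rw [indicator_of_notMem fun h => hbt h.2]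
    exact zero_le

lemma iSup_mul_indicator_inv_le_one :
    ⨆ s ∈ DomIoo R, φ s * (Ioo 0 t).indicator (fun s => (φ s)⁻¹) s ≤ 1 := by
  refine iSup₂_le fun s _ => ?_
  by_cases hs : s ∈ Ioo 0 t
  · rw [indicator_of_mem hs]
    exact ENNReal.mul_inv_le_one _
  · rw [indicator_of_notMem hs, mul_zero]
    exact zero_le

lemma dstar_indicator_Ioo_inv :
    dstar ((Ioo 0 t).indicator fun s => (φ s)⁻¹) t =
      (∫⁻ s in Ioo 0 t, 1 / φ s) / ENNReal.ofReal t := by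
  rw [dstar, setLIntegral_congr_fun measurableSet_Ioo fun s hs => by
    rw [indicator_of_mem hs, ← one_div]]

lemma lintegral_inv_le_of_iSup_mul_dstar_le {c : ℝ≥0∞} (ht : t ∈ DomIoo R)
    (hφt : φ t ≠ 0 ∧ φ t ≠ ⊤) (hφ : MonotoneOn φ (Ioo 0 t))
    (hbound : ∀ f : ℝ → ℝ≥0∞, NonincOn R f →
      ⨆ t ∈ DomIoo R, φ t * dstar f t ≤ c * ⨆ t ∈ DomIoo R, φ t * f t) :
    ∫⁻ s in Ioo 0 t, 1 / φ s ≤ c * (ENNReal.ofReal t / φ t) := by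
  set f := (Ioo 0 t).indicator fun s => (φ s)⁻¹
  rw [← ENNReal.mul_div_le_iff_le_mul_div hφt.1 hφt.2 (ofReal_ne_zero_of_mem_domIoo ht)
    ENNReal.ofReal_ne_top, ← dstar_indicator_Ioo_inv]
  calc φ t * dstar f t ≤ ⨆ t ∈ DomIoo R, φ t * dstar f t := le_iSup₂_of_le t ht le_rfl
    _ ≤ c * ⨆ t ∈ DomIoo R, φ t * f t := hbound f (nonincOn_indicator_Ioo_inv hφ)
    _ ≤ c * 1 := mul_le_mul_right iSup_mul_indicator_inv_le_one c
    _ = c := mul_one c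

end

theorem statement1_general (R : ℝ≥0∞) (φ : ℝ → ℝ≥0∞)
    (hφ : QuasiConcaveOn R φ) :
    ((∃ C : ℝ, 0 < C ∧ ∀ f : ℝ → ℝ≥0∞, NonincOn R f →
        (⨆ t ∈ DomIoo R, φ t * dstar f t) ≤
          ENNReal.ofReal C * ⨆ t ∈ DomIoo R, φ t * f t) ↔
      BCond R φ) ∧
    (∀ f : ℝ → ℝ≥0∞, NonincOn R f →
      (⨆ t ∈ DomIoo R, φ t * f t) ≤ ⨆ t ∈ DomIoo R, φ t * dstar f t) := by
  obtain ⟨-, hφpos, hφmono, -⟩ := hφ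
  have hφ : ∀ t ∈ DomIoo R, φ t ≠ 0 ∧ φ t ≠ ⊤ := fun t ht =>
    ⟨(hφpos t ht).1.ne', (hφpos t ht).2.ne⟩
  have hφmonoOn : ∀ t ∈ DomIoo R, MonotoneOn φ (Ioo 0 t) := fun t ht a ha b hb hab =>
    hφmono a b ha.1.le hab (mem_domIoo_of_mem_Ioo ht hb)
  refine ⟨⟨fun ⟨C, hC, hbound⟩ => ⟨C, hC, fun t ht => ?_⟩,
    fun ⟨C, hC, hB⟩ => ⟨C, hC, fun f _ => ?_⟩⟩, fun f hf => ?_⟩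
  · exact lintegral_inv_le_of_iSup_mul_dstar_le ht (hφ t ht) (hφmonoOn t ht) hbound
  · exact iSup_mul_dstar_le_of_lintegral_inv_le (ENNReal.ofReal_pos.2 hC).ne' hφ hB
  · exact iSup₂_mono fun t ht => mul_le_mul_right (le_dstar hf ht) _

/-- `sup φ f** ≲ sup φ f` for all nonneg. nonincreasing `f` iff `φ ∈ B`; the reverse
inequality `sup φ f ≤ sup φ f**` always holds. -/
theorem statement1 (R : ℝ≥0∞) (hR : 0 < R) (φ : ℝ → ℝ≥0∞)
    (hφ : QuasiConcaveOn R φ) :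
    ((∃ C : ℝ, 0 < C ∧ ∀ f : ℝ → ℝ≥0∞, NonincOn R f →
        (⨆ t ∈ DomIoo R, φ t * dstar f t) ≤
          ENNReal.ofReal C * ⨆ t ∈ DomIoo R, φ t * f t) ↔
      BCond R φ) ∧
    (∀ f : ℝ → ℝ≥0∞, NonincOn R f →
      (⨆ t ∈ DomIoo R, φ t * f t) ≤ ⨆ t ∈ DomIoo R, φ t * dstar f t) :=
  statement1_general R φ hφ
end
end

section
/- Let 0 < R ≤ ∞ and let ψ be a quasiconcave function on [0,R). Then there exists a constant C > 0 such that ∫₀ᴿ T_ψ f(t) dt ≤ C · ∫₀ᴿ f(t) dt for every nonnegative nonincreasing measurable function f on (0,R) if and only if ψ satisfies the B-condition. (This is the statement that T_ψ : L¹ → L¹ is bounded if and only if ψ ∈ B.) -/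
open MeasureTheory Set ENNReal Filter

noncomputable section

/-!
Testing boundedness on `f = 𝟙_(0,t₀)` gives the `B`-condition: for `t < t₀` some `s ∈ (t, t₀)`
with `s ≥ t₀/2` has `ψ s ≥ ψ t₀ / 2` (as `ψ(s)/s` is nonincreasing), so `T_ψ f(t) ≥ ψ(t₀)/(2ψ(t))`.

Conversely, since `ψ(r)/r` and `f` are nonincreasing, `ψ(s) f(s) ≤ 2 ∫_{s/2}^s ψ(r) f(r) dr / r`,
so `T_ψ f(t) ≤ (2/ψ(t)) ∫_{t/2}^R ψ(r) f(r) dr / r`. Integrating in `t` and exchanging the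
order of integration leaves `∫_0^{2r} dt/ψ(t) ≤ (C + 1) r/ψ(r)`, the `B`-condition on `(0, r)`
plus monotonicity of `ψ` on `[r, 2r)`.
-/

lemma measurableSet_DomIoo (R : ℝ≥0∞) : MeasurableSet (DomIoo R) :=
  measurableSet_Ioi.inter (ENNReal.measurable_ofReal measurableSet_Iio)

lemma mem_DomIoo_of_le {R : ℝ≥0∞} {s t : ℝ} (hs : 0 < s) (hst : s ≤ t) (ht : t ∈ DomIoo R) :
    s ∈ DomIoo R :=
  ⟨hs, (ENNReal.ofReal_le_ofReal hst).trans_lt ht.2⟩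

lemma nonincOn_indicator_Ioo (R : ℝ≥0∞) (t₀ : ℝ) :
    NonincOn R ((Ioo 0 t₀).indicator (1 : ℝ → ℝ≥0∞)) := by
  refine ⟨measurable_one.indicator measurableSet_Ioo, fun s t hs hst _ => ?_⟩
  by_cases ht : t ∈ Ioo 0 t₀
  · rw [indicator_of_mem ht, indicator_of_mem (show s ∈ Ioo 0 t₀ from ⟨hs.1, hst.trans_lt ht.2⟩)]
    rfl
  · simp only [indicator_of_notMem ht, zero_le]

lemma mul_le_two_mul_setLIntegral_Ioo_half {g : ℝ → ℝ≥0∞} {s : ℝ}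
    (hg : ∀ r ∈ Ioo (s / 2) s, g s ≤ g r) :
    ENNReal.ofReal s * g s ≤ 2 * ∫⁻ r in Ioo (s / 2) s, g r := by
  have hvol : ENNReal.ofReal s = 2 * volume (Ioo (s / 2) s) := by
    rw [Real.volume_Ioo, ← ENNReal.ofReal_ofNat 2, ← ENNReal.ofReal_mul zero_le_two]
    ring_nf
  calc ENNReal.ofReal s * g s = 2 * ∫⁻ _ in Ioo (s / 2) s, g s := by
        rw [setLIntegral_const, hvol, mul_comm (g s), mul_assoc]
    _ ≤ 2 * ∫⁻ r in Ioo (s / 2) s, g r := by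
        gcongr 2 * ?_
        exact setLIntegral_mono' measurableSet_Ioo hg

lemma setLIntegral_mul_setLIntegral_Ioi_half_comm {S : Set ℝ} {a b : ℝ → ℝ≥0∞}
    (ha : AEMeasurable a (volume.restrict S)) (hb : AEMeasurable b (volume.restrict S)) :
    ∫⁻ t in S, a t * ∫⁻ r in Ioi (t / 2) ∩ S, b r =
      ∫⁻ r in S, b r * ∫⁻ t in Iio (2 * r) ∩ S, a t := by
  set K : ℝ → ℝ → ℝ≥0∞ := fun t r =>
    {p : ℝ × ℝ | p.1 < 2 * p.2}.indicator (fun p => a p.1 * b p.2) (t, r)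
  have hK : AEMeasurable (Function.uncurry K) ((volume.restrict S).prod (volume.restrict S)) :=
    (ha.comp_fst.mul hb.comp_snd).indicator
      (measurableSet_lt measurable_fst (measurable_snd.const_mul 2))
  have inner_right (t : ℝ) :
      ∫⁻ r in S, K t r = a t * ∫⁻ r in Ioi (t / 2) ∩ S, b r := by
    have hKt : K t = (Ioi (t / 2)).indicator (fun r => a t * b r) := by
      ext r
      have hiff : t / 2 < r ↔ t < 2 * r := by constructor <;> intro <;> linarith
      simp only [K, indicator, mem_ofPred_eq, mem_Ioi, hiff]
    rw [hKt, lintegral_indicator measurableSet_Ioi, lintegral_const_mul'' _ hb.restrict,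
      Measure.restrict_restrict measurableSet_Ioi]
  have inner_left (r : ℝ) :
      ∫⁻ t in S, K t r = b r * ∫⁻ t in Iio (2 * r) ∩ S, a t := by
    have hKr : (fun t => K t r) = (Iio (2 * r)).indicator (fun t => a t * b r) := by
      ext t
      simp only [K, indicator, mem_ofPred_eq, mem_Iio]
    rw [hKr, lintegral_indicator measurableSet_Iio, lintegral_mul_const'' _ ha.restrict,
      Measure.restrict_restrict measurableSet_Iio, mul_comm]
  simp_rw [← inner_right, ← inner_left]
  exact lintegral_lintegral_swap hK

namespace QuasiConcaveOn

variable {R : ℝ≥0∞} {ψ : ℝ → ℝ≥0∞}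

lemma pos (hψ : QuasiConcaveOn R ψ) {t : ℝ} (ht : t ∈ DomIoo R) : 0 < ψ t := (hψ.2.1 t ht).1

lemma lt_top (hψ : QuasiConcaveOn R ψ) {t : ℝ} (ht : t ∈ DomIoo R) : ψ t < ⊤ := (hψ.2.1 t ht).2

lemma monotoneOn (hψ : QuasiConcaveOn R ψ) : MonotoneOn ψ (DomIoo R) :=
  fun s hs t ht hst => hψ.2.2.1 s t hs.1.le hst ht

lemma aemeasurable (hψ : QuasiConcaveOn R ψ) : AEMeasurable ψ (volume.restrict (DomIoo R)) :=
  aemeasurable_restrict_of_monotoneOn (measurableSet_DomIoo R) hψ.monotoneOn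

lemma le_two_mul (hψ : QuasiConcaveOn R ψ) {s t : ℝ} (hs : s ∈ DomIoo R) (hst : s ≤ t)
    (ht : t ∈ DomIoo R) (hts : t ≤ 2 * s) : ψ t ≤ 2 * ψ s := by
  have hs0 : ENNReal.ofReal s ≠ 0 := (ENNReal.ofReal_pos.2 hs.1).ne'
  have ht0 : ENNReal.ofReal t ≠ 0 := (ENNReal.ofReal_pos.2 ht.1).ne'
  calc ψ t = ψ t / ENNReal.ofReal t * ENNReal.ofReal t :=
        (ENNReal.div_mul_cancel ht0 ENNReal.ofReal_ne_top).symm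
    _ ≤ ψ s / ENNReal.ofReal s * (2 * ENNReal.ofReal s) := by
        refine mul_le_mul' (hψ.2.2.2 s t hs hst ht) ?_
        rw [← ENNReal.ofReal_ofNat 2, ← ENNReal.ofReal_mul zero_le_two]
        exact ENNReal.ofReal_le_ofReal hts
    _ = 2 * ψ s := by
        rw [mul_left_comm, ENNReal.div_mul_cancel hs0 ENNReal.ofReal_ne_top]

lemma setLIntegral_inv_Iio_two_mul_le (hψ : QuasiConcaveOn R ψ) {C : ℝ}
    (hB : ∀ t ∈ DomIoo R, ∫⁻ s in Ioo 0 t, 1 / ψ s ≤ ENNReal.ofReal C * (ENNReal.ofReal t / ψ t))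
    {r : ℝ} (hr : r ∈ DomIoo R) :
    ∫⁻ t in Iio (2 * r) ∩ DomIoo R, (ψ t)⁻¹ ≤
      (ENNReal.ofReal C + 1) * (ENNReal.ofReal r / ψ r) := by
  have hsplit : Iio (2 * r) ∩ DomIoo R ⊆ Ioo 0 r ∪ Ico r (2 * r) ∩ DomIoo R := by
    rintro t ⟨ht2, ht⟩
    rcases lt_or_ge t r with htr | hrt
    · exact Or.inl ⟨ht.1, htr⟩
    · exact Or.inr ⟨⟨hrt, ht2⟩, ht⟩
  have hupper : ∫⁻ t in Ico r (2 * r) ∩ DomIoo R, (ψ t)⁻¹ ≤ ENNReal.ofReal r / ψ r :=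
    calc ∫⁻ t in Ico r (2 * r) ∩ DomIoo R, (ψ t)⁻¹
        ≤ ∫⁻ _ in Ico r (2 * r), (ψ r)⁻¹ :=
          (lintegral_mono_set inter_subset_left).trans' <|
            setLIntegral_mono' (measurableSet_Ico.inter (measurableSet_DomIoo R)) fun t ht =>
              ENNReal.inv_le_inv.2 (hψ.monotoneOn hr ht.2 ht.1.1)
      _ = ENNReal.ofReal r / ψ r := by
          rw [setLIntegral_const, Real.volume_Ico, div_eq_mul_inv, mul_comm]
          ring_nf
  calc ∫⁻ t in Iio (2 * r) ∩ DomIoo R, (ψ t)⁻¹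
      ≤ (∫⁻ t in Ioo 0 r, (ψ t)⁻¹) + ∫⁻ t in Ico r (2 * r) ∩ DomIoo R, (ψ t)⁻¹ :=
        (lintegral_mono_set hsplit).trans (lintegral_union_le _ _ _)
    _ ≤ ENNReal.ofReal C * (ENNReal.ofReal r / ψ r) + ENNReal.ofReal r / ψ r := by
        gcongr
        simpa only [one_div] using hB r hr
    _ = (ENNReal.ofReal C + 1) * (ENNReal.ofReal r / ψ r) := by rw [add_mul, one_mul]

lemma div_le_two_mul_Tsup_indicator_Ioo (hψ : QuasiConcaveOn R ψ) {t₀ t : ℝ}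
    (ht₀ : t₀ ∈ DomIoo R) (ht : t ∈ Ioo 0 t₀) :
    ψ t₀ / ψ t ≤ 2 * Tsup R ψ ((Ioo 0 t₀).indicator 1) t := by
  obtain ⟨ht0, htt₀⟩ := ht
  set m := (t + t₀) / 2 with hm_def
  have hm : m ∈ Ioo 0 t₀ := ⟨by linarith, by linarith⟩
  have hmD : m ∈ DomIoo R := mem_DomIoo_of_le hm.1 hm.2.le ht₀
  have hmAbove : m ∈ DomAbove R t := ⟨by linarith, hmD.2⟩
  have hψm : ψ t₀ ≤ 2 * (ψ m * (Ioo 0 t₀).indicator 1 m) := by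
    rw [indicator_of_mem hm, Pi.one_apply, mul_one]
    exact hψ.le_two_mul hmD hm.2.le ht₀ (by linarith)
  calc ψ t₀ / ψ t ≤ 2 * (⨆ s ∈ DomAbove R t, ψ s * (Ioo 0 t₀).indicator 1 s) / ψ t := by
        gcongr
        refine hψm.trans (mul_le_mul_right ?_ (2 : ℝ≥0∞))
        exact le_iSup₂ (f := fun s (_ : s ∈ DomAbove R t) => ψ s * (Ioo 0 t₀).indicator 1 s)
          m hmAbove
    _ = 2 * Tsup R ψ ((Ioo 0 t₀).indicator 1) t := mul_div_assoc _ _ _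

lemma Tsup_le_setLIntegral_Ioi_half (hψ : QuasiConcaveOn R ψ) {f : ℝ → ℝ≥0∞} (hf : NonincOn R f)
    {t : ℝ} (ht : 0 ≤ t) :
    Tsup R ψ f t ≤
      2 * ((ψ t)⁻¹ * ∫⁻ r in Ioi (t / 2) ∩ DomIoo R, ψ r / ENNReal.ofReal r * f r) := by
  have hsup : ⨆ s ∈ DomAbove R t, ψ s * f s ≤
      2 * ∫⁻ r in Ioi (t / 2) ∩ DomIoo R, ψ r / ENNReal.ofReal r * f r := by
    refine iSup₂_le fun s hs => ?_
    have hts : t < s := hs.1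
    have hs0 : 0 < s := ht.trans_lt hts
    have hsD : s ∈ DomIoo R := ⟨hs0, hs.2⟩
    have hsub : Ioo (s / 2) s ⊆ Ioi (t / 2) ∩ DomIoo R := fun r ⟨hr, hrs⟩ =>
      ⟨by rw [mem_Ioi]; linarith, mem_DomIoo_of_le (by linarith) hrs.le hsD⟩
    calc ψ s * f s = ENNReal.ofReal s * (ψ s / ENNReal.ofReal s * f s) := by
          rw [← mul_assoc, ENNReal.mul_div_cancel (ENNReal.ofReal_pos.2 hs0).ne'
            ENNReal.ofReal_ne_top]
      _ ≤ 2 * ∫⁻ r in Ioo (s / 2) s, ψ r / ENNReal.ofReal r * f r := by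
          refine mul_le_two_mul_setLIntegral_Ioo_half fun r ⟨hr, hrs⟩ => ?_
          have hrD : r ∈ DomIoo R := mem_DomIoo_of_le (by linarith) hrs.le hsD
          exact mul_le_mul' (hψ.2.2.2 r s hrD hrs.le hsD) (hf.2 r s hrD hrs.le hsD)
      _ ≤ 2 * ∫⁻ r in Ioi (t / 2) ∩ DomIoo R, ψ r / ENNReal.ofReal r * f r := by
          gcongr 2 * ?_
          exact lintegral_mono_set hsub
  calc Tsup R ψ f t = (ψ t)⁻¹ * ⨆ s ∈ DomAbove R t, ψ s * f s := by
        rw [Tsup, div_eq_mul_inv, mul_comm]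
    _ ≤ (ψ t)⁻¹ * (2 * ∫⁻ r in Ioi (t / 2) ∩ DomIoo R, ψ r / ENNReal.ofReal r * f r) := by
        gcongr
    _ = 2 * ((ψ t)⁻¹ * ∫⁻ r in Ioi (t / 2) ∩ DomIoo R, ψ r / ENNReal.ofReal r * f r) :=
        mul_left_comm _ _ _

lemma bcond_of_lintegral_Tsup_le (hψ : QuasiConcaveOn R ψ) {C : ℝ} (hC : 0 < C)
    (hT : ∀ f : ℝ → ℝ≥0∞, NonincOn R f →
      ∫⁻ t in DomIoo R, Tsup R ψ f t ≤ ENNReal.ofReal C * ∫⁻ t in DomIoo R, f t) :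
    BCond R ψ := by
  refine ⟨2 * C, by positivity, fun t₀ ht₀ => ?_⟩
  set f : ℝ → ℝ≥0∞ := (Ioo 0 t₀).indicator 1
  have hsub : Ioo 0 t₀ ⊆ DomIoo R := fun t ht => mem_DomIoo_of_le ht.1 ht.2.le ht₀
  have hf : ∫⁻ t in DomIoo R, f t = ENNReal.ofReal t₀ := by
    rw [lintegral_indicator_one measurableSet_Ioo, Measure.restrict_apply measurableSet_Ioo,
      inter_eq_self_of_subset_left hsub, Real.volume_Ioo, sub_zero]
  have key : ψ t₀ * ∫⁻ t in Ioo 0 t₀, (ψ t)⁻¹ ≤ ENNReal.ofReal (2 * C) * ENNReal.ofReal t₀ :=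
    calc ψ t₀ * ∫⁻ t in Ioo 0 t₀, (ψ t)⁻¹ = ∫⁻ t in Ioo 0 t₀, ψ t₀ / ψ t :=
          (lintegral_const_mul' _ _ (hψ.lt_top ht₀).ne).symm
      _ ≤ ∫⁻ t in Ioo 0 t₀, 2 * Tsup R ψ f t :=
          setLIntegral_mono' measurableSet_Ioo fun t ht =>
            hψ.div_le_two_mul_Tsup_indicator_Ioo ht₀ ht
      _ ≤ 2 * ∫⁻ t in DomIoo R, Tsup R ψ f t := by
          rw [lintegral_const_mul' _ _ ofNat_ne_top]
          gcongr 2 * ?_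
          exact lintegral_mono_set hsub
      _ ≤ 2 * (ENNReal.ofReal C * ENNReal.ofReal t₀) := by
          gcongr 2 * ?_
          exact hf ▸ hT f (nonincOn_indicator_Ioo R t₀)
      _ = ENNReal.ofReal (2 * C) * ENNReal.ofReal t₀ := by
          rw [← mul_assoc, ENNReal.ofReal_mul zero_le_two, ENNReal.ofReal_ofNat]
  simp only [one_div]
  rw [← mul_div_assoc, ENNReal.le_div_iff_mul_le (Or.inl (hψ.pos ht₀).ne')
    (Or.inl (hψ.lt_top ht₀).ne), mul_comm]
  exact key

lemma lintegral_Tsup_le_of_bcond (hψ : QuasiConcaveOn R ψ) {C : ℝ} (hC : 0 ≤ C)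
    (hB : ∀ t ∈ DomIoo R, ∫⁻ s in Ioo 0 t, 1 / ψ s ≤ ENNReal.ofReal C * (ENNReal.ofReal t / ψ t))
    {f : ℝ → ℝ≥0∞} (hf : NonincOn R f) :
    ∫⁻ t in DomIoo R, Tsup R ψ f t ≤ ENNReal.ofReal (2 * (C + 1)) * ∫⁻ t in DomIoo R, f t := by
  have hg : AEMeasurable (fun r => ψ r / ENNReal.ofReal r * f r) (volume.restrict (DomIoo R)) :=
    (hψ.aemeasurable.div ENNReal.measurable_ofReal.aemeasurable).mul hf.1.aemeasurable
  have hcancel : ∀ r ∈ DomIoo R,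
      ψ r / ENNReal.ofReal r * f r * (ENNReal.ofReal r / ψ r) = f r := by
    intro r hr
    have hr0 : ENNReal.ofReal r ≠ 0 := (ENNReal.ofReal_pos.2 hr.1).ne'
    rw [div_eq_mul_inv, div_eq_mul_inv,
      show ∀ a b c d : ℝ≥0∞, a * b * c * (d * a⁻¹) = c * (a * a⁻¹) * (d * b) by intros; ring,
      ENNReal.mul_inv_cancel (hψ.pos hr).ne' (hψ.lt_top hr).ne,
      ENNReal.mul_inv_cancel hr0 ENNReal.ofReal_ne_top, mul_one, mul_one]
  calc ∫⁻ t in DomIoo R, Tsup R ψ f t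
      ≤ ∫⁻ t in DomIoo R,
          2 * ((ψ t)⁻¹ * ∫⁻ r in Ioi (t / 2) ∩ DomIoo R, ψ r / ENNReal.ofReal r * f r) :=
        setLIntegral_mono' (measurableSet_DomIoo R) fun t ht =>
          hψ.Tsup_le_setLIntegral_Ioi_half hf ht.1.le
    _ = 2 * ∫⁻ r in DomIoo R,
          ψ r / ENNReal.ofReal r * f r * ∫⁻ t in Iio (2 * r) ∩ DomIoo R, (ψ t)⁻¹ := by
        rw [lintegral_const_mul' _ _ ofNat_ne_top,
          setLIntegral_mul_setLIntegral_Ioi_half_comm (a := fun t => (ψ t)⁻¹)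
            hψ.aemeasurable.inv hg]
    _ ≤ 2 * ∫⁻ r in DomIoo R, (ENNReal.ofReal C + 1) * f r := by
        gcongr 2 * ?_
        refine setLIntegral_mono' (measurableSet_DomIoo R) fun r hr => ?_
        calc ψ r / ENNReal.ofReal r * f r * ∫⁻ t in Iio (2 * r) ∩ DomIoo R, (ψ t)⁻¹
            ≤ ψ r / ENNReal.ofReal r * f r *
                ((ENNReal.ofReal C + 1) * (ENNReal.ofReal r / ψ r)) := by
              gcongr
              exact hψ.setLIntegral_inv_Iio_two_mul_le hB hr
          _ = (ENNReal.ofReal C + 1) * f r := by rw [mul_left_comm, hcancel r hr]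
    _ = ENNReal.ofReal (2 * (C + 1)) * ∫⁻ t in DomIoo R, f t := by
        rw [lintegral_const_mul' _ _ (by finiteness), ← mul_assoc, ENNReal.ofReal_mul zero_le_two,
          ENNReal.ofReal_add hC zero_le_one, ENNReal.ofReal_one, ENNReal.ofReal_ofNat]

end QuasiConcaveOn

theorem statement3_general (R : ℝ≥0∞) (ψ : ℝ → ℝ≥0∞)
    (hψ : QuasiConcaveOn R ψ) :
    (∃ C : ℝ, 0 < C ∧ ∀ f : ℝ → ℝ≥0∞, NonincOn R f →
        (∫⁻ t in DomIoo R, Tsup R ψ f t) ≤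
          ENNReal.ofReal C * ∫⁻ t in DomIoo R, f t) ↔
      BCond R ψ := by
  constructor
  · rintro ⟨C, hC, hT⟩
    exact hψ.bcond_of_lintegral_Tsup_le hC hT
  · rintro ⟨C, hC, hB⟩
    exact ⟨2 * (C + 1), by positivity, fun f hf => hψ.lintegral_Tsup_le_of_bcond hC.le hB hf⟩

/-- `T_ψ : L¹ → L¹` is bounded if and only if `ψ ∈ B`. -/
theorem statement3 (R : ℝ≥0∞) (hR : 0 < R) (ψ : ℝ → ℝ≥0∞)
    (hψ : QuasiConcaveOn R ψ) :
    (∃ C : ℝ, 0 < C ∧ ∀ f : ℝ → ℝ≥0∞, NonincOn R f →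
        (∫⁻ t in DomIoo R, Tsup R ψ f t) ≤
          ENNReal.ofReal C * ∫⁻ t in DomIoo R, f t) ↔
      BCond R ψ :=
  statement3_general R ψ hψ
end
end

section
/- Let 0 < R ≤ ∞ and let ψ be a quasiconcave function on [0,R). Then there exists a constant C > 0 such that sup_{0<t<R} ψ(t) · (T_ψ f)**(t) ≤ C · sup_{0<t<R} ψ(t) f**(t) for every nonnegative nonincreasing measurable function f on (0,R) if and only if ψ satisfies the B-condition. (This is the statement that T_ψ : M_ψ → M_ψ is bounded if and only if ψ ∈ B.) -/
open MeasureTheory Set ENNReal Filter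

noncomputable section

lemma ennreal_cancel_aux (a b c : ℝ≥0∞) (ha0 : a ≠ 0) (hat : a ≠ ⊤)
    (hb0 : b ≠ 0) (hbt : b ≠ ⊤) : a * (c * (b / a)) / b = c := by
  simp only [div_eq_mul_inv]
  have : a * (c * (b * a⁻¹)) * b⁻¹ = c * (a * a⁻¹) * (b * b⁻¹) := by ring
  rw [this, ENNReal.mul_inv_cancel ha0 hat, ENNReal.mul_inv_cancel hb0 hbt,
    mul_one, mul_one]

/-- `T_ψ : M_ψ → M_ψ` is bounded if and only if `ψ ∈ B`. -/
theorem statement4 (R : ℝ≥0∞) (hR : 0 < R) (ψ : ℝ → ℝ≥0∞)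
    (hψ : QuasiConcaveOn R ψ) :
    (∃ C : ℝ, 0 < C ∧ ∀ f : ℝ → ℝ≥0∞, NonincOn R f →
        (⨆ t ∈ DomIoo R, ψ t * dstar (Tsup R ψ f) t) ≤
          ENNReal.ofReal C * ⨆ t ∈ DomIoo R, ψ t * dstar f t) ↔
      BCond R ψ := by
  obtain ⟨hψ0, hψfin, hψmono, hψdiv⟩ := hψ
  constructor
  · -- boundedness ⇒ B-condition
    rintro ⟨C, hC, hbd⟩
    refine ⟨C, hC, ?_⟩
    rintro x ⟨hx0, hxR⟩
    have hxD : x ∈ DomIoo R := ⟨hx0, hxR⟩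
    obtain ⟨hψx0, hψxt⟩ := hψfin x hxD
    have hofx0 : ENNReal.ofReal x ≠ 0 := by
      simpa [ENNReal.ofReal_eq_zero] using not_le.2 hx0
    have hofxt : ENNReal.ofReal x ≠ ⊤ := ENNReal.ofReal_ne_top
    -- the test function
    set f : ℝ → ℝ≥0∞ := (Iic x).indicator (fun _ => (ψ x)⁻¹) with hfdef
    have hfni : NonincOn R f := by
      refine ⟨measurable_const.indicator measurableSet_Iic, ?_⟩
      intro s t hs hst ht
      by_cases h : t ≤ x
      · simp [hfdef, indicator, h, le_trans hst h]
      · simp [hfdef, indicator, h]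
    -- the integral of f over (0, t)
    have hint : ∀ t : ℝ, (∫⁻ s in Ioo (0 : ℝ) t, f s) =
        (ψ x)⁻¹ * volume (Iic x ∩ Ioo 0 t) := by
      intro t
      rw [hfdef]
      rw [lintegral_indicator measurableSet_Iic,
        Measure.restrict_restrict measurableSet_Iic, lintegral_const,
        Measure.restrict_apply_univ]
    -- the M_ψ norm of f is at most 1
    have hnorm : (⨆ t ∈ DomIoo R, ψ t * dstar f t) ≤ 1 := by
      refine iSup₂_le fun t ht => ?_
      obtain ⟨ht0, htR⟩ := ht
      have hoft0 : ENNReal.ofReal t ≠ 0 := by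
        simpa [ENNReal.ofReal_eq_zero] using not_le.2 ht0
      have hoftt : ENNReal.ofReal t ≠ ⊤ := ENNReal.ofReal_ne_top
      rw [dstar, hint t]
      rcases le_or_gt t x with h | h
      · -- t ≤ x
        have hset : Iic x ∩ Ioo (0:ℝ) t = Ioo 0 t := by
          apply inter_eq_self_of_subset_right
          intro s hs
          exact le_of_lt (lt_of_lt_of_le hs.2 h)
        rw [hset, Real.volume_Ioo, sub_zero]
        have hcan : (ψ x)⁻¹ * ENNReal.ofReal t / ENNReal.ofReal t = (ψ x)⁻¹ := by
          rw [mul_div_assoc, ENNReal.div_self hoft0 hoftt, mul_one]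
        rw [hcan, mul_comm]
        calc (ψ x)⁻¹ * ψ t ≤ (ψ x)⁻¹ * ψ x :=
              mul_le_mul_right (hψmono t x (le_of_lt ht0) h hxD) _
          _ = 1 := ENNReal.inv_mul_cancel hψx0.ne' hψxt.ne
      · -- x < t
        have hset : Iic x ∩ Ioo (0:ℝ) t = Ioc 0 x := by
          ext s
          simp only [mem_inter_iff, mem_Iic, mem_Ioo, mem_Ioc]
          constructor
          · rintro ⟨h1, h2, h3⟩; exact ⟨h2, h1⟩
          · rintro ⟨h1, h2⟩; exact ⟨h2, h1, lt_of_le_of_lt h2 h⟩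
        rw [hset, Real.volume_Ioc, sub_zero]
        have hkey := hψdiv x t hxD (le_of_lt h) ⟨ht0, htR⟩
        have heq : ψ t * ((ψ x)⁻¹ * ENNReal.ofReal x / ENNReal.ofReal t)
            = (ψ t / ENNReal.ofReal t) * (ENNReal.ofReal x / ψ x) := by
          simp only [div_eq_mul_inv]; ring
        rw [heq]
        calc (ψ t / ENNReal.ofReal t) * (ENNReal.ofReal x / ψ x)
            ≤ (ψ x / ENNReal.ofReal x) * (ENNReal.ofReal x / ψ x) :=
              mul_le_mul_left hkey _
          _ = 1 := by
              simp only [div_eq_mul_inv]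
              have : ψ x * (ENNReal.ofReal x)⁻¹ * (ENNReal.ofReal x * (ψ x)⁻¹)
                  = (ψ x * (ψ x)⁻¹) * (ENNReal.ofReal x * (ENNReal.ofReal x)⁻¹) := by
                ring
              rw [this, ENNReal.mul_inv_cancel hψx0.ne' hψxt.ne,
                ENNReal.mul_inv_cancel hofx0 hofxt, mul_one]
    -- T f dominates 1/ψ on (0, x)
    have hTf : ∀ s ∈ Ioo (0:ℝ) x, (1:ℝ≥0∞) / ψ s ≤ Tsup R ψ f s := by
      intro s hs
      rw [Tsup]
      refine ENNReal.div_le_div_right ?_ _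
      have hxmem : x ∈ DomAbove R s := ⟨hs.2, hxR⟩
      calc (1:ℝ≥0∞) = ψ x * f x := by
            rw [hfdef]
            simp [indicator, ENNReal.mul_inv_cancel hψx0.ne' hψxt.ne]
        _ ≤ ⨆ u ∈ DomAbove R s, ψ u * f u := le_biSup (fun u => ψ u * f u) hxmem
    -- lower bound for the left-hand side at t = x
    have hlow : ψ x * ((∫⁻ s in Ioo (0:ℝ) x, 1 / ψ s) / ENNReal.ofReal x)
        ≤ ψ x * dstar (Tsup R ψ f) x := by
      refine mul_le_mul_right (ENNReal.div_le_div_right ?_ _) _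
      refine lintegral_mono_ae ?_
      rw [ae_restrict_iff' measurableSet_Ioo]
      exact ae_of_all _ hTf
    have hchain : ψ x * ((∫⁻ s in Ioo (0:ℝ) x, 1 / ψ s) / ENNReal.ofReal x)
        ≤ ENNReal.ofReal C := by
      calc ψ x * ((∫⁻ s in Ioo (0:ℝ) x, 1 / ψ s) / ENNReal.ofReal x)
          ≤ ψ x * dstar (Tsup R ψ f) x := hlow
        _ ≤ ⨆ t ∈ DomIoo R, ψ t * dstar (Tsup R ψ f) t := le_biSup (fun t => ψ t * dstar (Tsup R ψ f) t) hxD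
        _ ≤ ENNReal.ofReal C * ⨆ t ∈ DomIoo R, ψ t * dstar f t := hbd f hfni
        _ ≤ ENNReal.ofReal C * 1 := mul_le_mul_right hnorm _
        _ = ENNReal.ofReal C := mul_one _
    -- unravel the algebra
    set I := ∫⁻ s in Ioo (0:ℝ) x, 1 / ψ s with hI
    have h1 : I / ENNReal.ofReal x ≤ ENNReal.ofReal C / ψ x := by
      rw [ENNReal.le_div_iff_mul_le (Or.inl hψx0.ne') (Or.inl hψxt.ne),
        mul_comm]
      exact hchain
    have h2 : I ≤ ENNReal.ofReal C / ψ x * ENNReal.ofReal x :=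
      (ENNReal.div_le_iff_le_mul (Or.inl hofx0) (Or.inl hofxt)).1 h1
    calc I ≤ ENNReal.ofReal C / ψ x * ENNReal.ofReal x := h2
      _ = ENNReal.ofReal C * (ENNReal.ofReal x / ψ x) := by
          simp only [div_eq_mul_inv]; ring
  · -- B-condition ⇒ boundedness
    rintro ⟨C, hC, hB⟩
    refine ⟨C, hC, ?_⟩
    intro f hf
    set N := ⨆ t ∈ DomIoo R, ψ t * dstar f t with hN
    by_cases hNtop : N = ⊤
    · rw [hNtop, ENNReal.mul_top (by simpa [ENNReal.ofReal_eq_zero] using not_le.2 hC)]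
      exact le_top
    refine iSup₂_le fun t ht => ?_
    obtain ⟨ht0, htR⟩ := ht
    have htD : t ∈ DomIoo R := ⟨ht0, htR⟩
    obtain ⟨hψt0, hψtt⟩ := hψfin t htD
    have hoft0 : ENNReal.ofReal t ≠ 0 := by
      simpa [ENNReal.ofReal_eq_zero] using not_le.2 ht0
    have hoftt : ENNReal.ofReal t ≠ ⊤ := ENNReal.ofReal_ne_top
    -- pointwise bound ψ s * f s ≤ N on (0, R)
    have hpt : ∀ s ∈ DomIoo R, ψ s * f s ≤ N := by
      rintro s ⟨hs0, hsR⟩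
      have hsD : s ∈ DomIoo R := ⟨hs0, hsR⟩
      have hofs0 : ENNReal.ofReal s ≠ 0 := by
        simpa [ENNReal.ofReal_eq_zero] using not_le.2 hs0
      have hofst : ENNReal.ofReal s ≠ ⊤ := ENNReal.ofReal_ne_top
      have hff : f s ≤ dstar f s := by
        rw [dstar]
        have : f s * ENNReal.ofReal s ≤ ∫⁻ u in Ioo (0:ℝ) s, f u := by
          calc f s * ENNReal.ofReal s
              = ∫⁻ _ in Ioo (0:ℝ) s, f s := by
                rw [setLIntegral_const, Real.volume_Ioo, sub_zero]
            _ ≤ ∫⁻ u in Ioo (0:ℝ) s, f u := by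
                refine lintegral_mono_ae ?_
                rw [ae_restrict_iff' measurableSet_Ioo]
                refine ae_of_all _ fun u hu => ?_
                exact hf.2 u s ⟨hu.1, lt_of_le_of_lt
                  (ENNReal.ofReal_le_ofReal (le_of_lt hu.2)) hsR⟩ (le_of_lt hu.2) hsD
        calc f s = f s * ENNReal.ofReal s / ENNReal.ofReal s := by
              rw [mul_div_assoc, ENNReal.div_self hofs0 hofst, mul_one]
          _ ≤ (∫⁻ u in Ioo (0:ℝ) s, f u) / ENNReal.ofReal s :=
              ENNReal.div_le_div_right this _
      calc ψ s * f s ≤ ψ s * dstar f s := mul_le_mul_right hff _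
        _ ≤ N := le_biSup (fun s => ψ s * dstar f s) hsD
    -- pointwise bound for T f
    have hT : ∀ s ∈ DomIoo R, Tsup R ψ f s ≤ N * (1 / ψ s) := by
      rintro s ⟨hs0, hsR⟩
      rw [Tsup]
      have : (⨆ u ∈ DomAbove R s, ψ u * f u) ≤ N := by
        refine iSup₂_le fun u hu => ?_
        exact hpt u ⟨lt_trans hs0 hu.1, hu.2⟩
      calc (⨆ u ∈ DomAbove R s, ψ u * f u) / ψ s ≤ N / ψ s :=
            ENNReal.div_le_div_right this _
        _ = N * (1 / ψ s) := by rw [div_eq_mul_inv, one_div]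
    -- integrate and apply the B-condition
    have hint : (∫⁻ s in Ioo (0:ℝ) t, Tsup R ψ f s)
        ≤ N * (ENNReal.ofReal C * (ENNReal.ofReal t / ψ t)) := by
      calc (∫⁻ s in Ioo (0:ℝ) t, Tsup R ψ f s)
          ≤ ∫⁻ s in Ioo (0:ℝ) t, N * (1 / ψ s) := by
            refine lintegral_mono_ae ?_
            rw [ae_restrict_iff' measurableSet_Ioo]
            refine ae_of_all _ fun s hs => ?_
            exact hT s ⟨hs.1, lt_of_le_of_lt
              (ENNReal.ofReal_le_ofReal (le_of_lt hs.2)) htR⟩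
        _ = N * ∫⁻ s in Ioo (0:ℝ) t, 1 / ψ s := lintegral_const_mul' _ _ hNtop
        _ ≤ N * (ENNReal.ofReal C * (ENNReal.ofReal t / ψ t)) :=
            mul_le_mul_right (hB t htD) _
    calc ψ t * dstar (Tsup R ψ f) t
        ≤ ψ t * (N * (ENNReal.ofReal C * (ENNReal.ofReal t / ψ t)) / ENNReal.ofReal t) := by
          rw [dstar]
          exact mul_le_mul_right (ENNReal.div_le_div_right hint _) _
      _ = ψ t * (ENNReal.ofReal C * N * (ENNReal.ofReal t / ψ t)) / ENNReal.ofReal t := by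
          simp only [div_eq_mul_inv]; ring
      _ = ENNReal.ofReal C * N :=
          ennreal_cancel_aux _ _ _ hψt0.ne' hψtt.ne hoft0 hoftt
end
end

section
/- Let 0 < R ≤ ∞ and let φ be a quasiconcave function on [0,R). Then there exists a constant C > 0 such that S_φ(f**)(t) ≤ C · S_φ f(t) for every nonnegative nonincreasing measurable function f on (0,R) and every t ∈ (0,R) if and only if φ satisfies the B-condition. -/
open MeasureTheory Set ENNReal Filter

noncomputable section

/-! `(⇐)`: since `φ(u) f(u) ≤ M := sup_{0<u<t} φ(u) f(u)`, the B-condition gives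
`φ(s) f**(s) ≤ (φ(s)/s) ∫₀ˢ M/φ ≤ C M` for `s < t`.
`(⇒)`: test the inequality on the nonincreasing function `1/φ`, for which `S_φ(1/φ) ≤ 1/φ`;
this yields `φ(s) (1/φ)**(s) ≤ C`, which is the B-condition at `s`. -/

lemma Ioo_zero_subset_domIoo {R : ℝ≥0∞} {t : ℝ} (ht : t ∈ DomIoo R) : Ioo 0 t ⊆ DomIoo R :=
  fun _ hu => ⟨hu.1, (ENNReal.ofReal_le_ofReal hu.2.le).trans_lt ht.2⟩

lemma exists_gt_mem_domIoo {R : ℝ≥0∞} {s : ℝ} (hs : s ∈ DomIoo R) : ∃ t ∈ DomIoo R, s < t := by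
  obtain ⟨r, hsr, hrR⟩ := exists_between hs.2
  have hr : r ≠ ⊤ := hrR.ne_top
  refine ⟨r.toReal, ⟨hs.1.trans ?_, by rwa [ENNReal.ofReal_toReal hr]⟩, ?_⟩ <;>
    rwa [← ENNReal.ofReal_lt_iff_lt_toReal hs.1.le hr]

section Ssup

variable {φ g : ℝ → ℝ≥0∞} {s t : ℝ}

lemma mul_div_le_Ssup (hs : s ∈ Ioo 0 t) : φ s * g s / φ t ≤ Ssup φ g t :=
  ENNReal.div_le_div_right (le_iSup₂ (f := fun u (_ : u ∈ Ioo (0 : ℝ) t) => φ u * g u) s hs) _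

lemma Ssup_le_div {A : ℝ≥0∞} (h : ∀ s ∈ Ioo 0 t, φ s * g s ≤ A) : Ssup φ g t ≤ A / φ t :=
  ENNReal.div_le_div_right (iSup₂_le h) _

end Ssup

section Sufficiency

variable {R : ℝ≥0∞} {φ : ℝ → ℝ≥0∞} {c : ℝ≥0∞}

lemma mul_dstar_le_of_integral_inv_le {f : ℝ → ℝ≥0∞} {s : ℝ} {A : ℝ≥0∞} (hs : 0 < s)
    (hφs : φ s ≠ 0) (hφs' : φ s ≠ ⊤) (hA : A ≠ ⊤) (hf : ∀ u ∈ Ioo 0 s, f u ≤ A * (1 / φ u))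
    (hB : ∫⁻ u in Ioo 0 s, 1 / φ u ≤ c * (ENNReal.ofReal s / φ s)) :
    φ s * dstar f s ≤ c * A := by
  have hs0 : ENNReal.ofReal s ≠ 0 := (ENNReal.ofReal_pos.2 hs).ne'
  have hint : ∫⁻ u in Ioo 0 s, f u ≤ A * (c * (ENNReal.ofReal s / φ s)) :=
    calc ∫⁻ u in Ioo 0 s, f u
        ≤ ∫⁻ u in Ioo 0 s, A * (1 / φ u) := setLIntegral_mono_ae' measurableSet_Ioo
          (ae_of_all _ hf)
      _ = A * ∫⁻ u in Ioo 0 s, 1 / φ u := lintegral_const_mul' _ _ hA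
      _ ≤ A * (c * (ENNReal.ofReal s / φ s)) := by gcongr
  calc φ s * dstar f s
      ≤ φ s * (A * (c * (ENNReal.ofReal s / φ s)) / ENNReal.ofReal s) := by
        unfold dstar; gcongr
    _ = c * A * (φ s * (φ s)⁻¹) * (ENNReal.ofReal s * (ENNReal.ofReal s)⁻¹) := by
        simp only [div_eq_mul_inv]; ring
    _ = c * A := by
        rw [ENNReal.mul_inv_cancel hφs hφs', ENNReal.mul_inv_cancel hs0 ENNReal.ofReal_ne_top,
          mul_one, mul_one]

lemma Ssup_dstar_le_of_integral_inv_le (hφ : ∀ t ∈ DomIoo R, 0 < φ t ∧ φ t < ⊤) (hc : c ≠ 0)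
    (hB : ∀ s ∈ DomIoo R, ∫⁻ u in Ioo 0 s, 1 / φ u ≤ c * (ENNReal.ofReal s / φ s))
    (f : ℝ → ℝ≥0∞) {t : ℝ} (ht : t ∈ DomIoo R) :
    Ssup φ (dstar f) t ≤ c * Ssup φ f t := by
  set M := ⨆ s ∈ Ioo 0 t, φ s * f s
  have hSf : Ssup φ f t = M / φ t := rfl
  rcases eq_or_ne M ⊤ with hMtop | hMtop
  · rw [hSf, hMtop, ENNReal.top_div_of_lt_top (hφ t ht).2, ENNReal.mul_top hc]
    exact le_top
  have hfM : ∀ u ∈ Ioo 0 t, f u ≤ M * (1 / φ u) := fun u hu => by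
    have huD := Ioo_zero_subset_domIoo ht hu
    rw [mul_one_div, ENNReal.le_div_iff_mul_le (Or.inl (hφ u huD).1.ne')
      (Or.inl (hφ u huD).2.ne), mul_comm]
    exact le_iSup₂ (f := fun u (_ : u ∈ Ioo (0 : ℝ) t) => φ u * f u) u hu
  calc Ssup φ (dstar f) t
      ≤ c * M / φ t := Ssup_le_div fun s hs => by
        have hsD := Ioo_zero_subset_domIoo ht hs
        exact mul_dstar_le_of_integral_inv_le hs.1 (hφ s hsD).1.ne' (hφ s hsD).2.ne hMtop
          (fun u hu => hfM u ⟨hu.1, hu.2.trans hs.2⟩) (hB s hsD)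
    _ = c * Ssup φ f t := by rw [hSf, mul_div_assoc]

end Sufficiency

section Necessity

variable {R : ℝ≥0∞} {φ : ℝ → ℝ≥0∞}

/-- Stands in for `1/φ`, which is nonincreasing only on `(0, R)`: this one is nonincreasing,
hence measurable, on all of `ℝ`. -/
def invMajorant (R : ℝ≥0∞) (φ : ℝ → ℝ≥0∞) (x : ℝ) : ℝ≥0∞ :=
  ⨆ u ∈ {u : ℝ | x ≤ u ∧ u ∈ DomIoo R}, (φ u)⁻¹

lemma antitone_invMajorant : Antitone (invMajorant R φ) := fun _ _ hxy =>
  biSup_mono fun _ hu => ⟨hxy.trans hu.1, hu.2⟩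

lemma nonincOn_invMajorant : NonincOn R (invMajorant R φ) :=
  ⟨antitone_invMajorant.measurable, fun _ _ _ hst _ => antitone_invMajorant hst⟩

lemma invMajorant_eq (hmono : ∀ s t : ℝ, 0 ≤ s → s ≤ t → t ∈ DomIoo R → φ s ≤ φ t) {u : ℝ} (hu : u ∈ DomIoo R) : invMajorant R φ u = (φ u)⁻¹ :=
  le_antisymm (iSup₂_le fun v hv => ENNReal.inv_le_inv.2 (hmono u v hu.1.le hv.1 hv.2))
    (le_iSup₂ (f := fun v (_ : v ∈ {v : ℝ | u ≤ v ∧ v ∈ DomIoo R}) => (φ v)⁻¹) u ⟨le_rfl, hu⟩)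

lemma Ssup_invMajorant_le (hmono : ∀ s t : ℝ, 0 ≤ s → s ≤ t → t ∈ DomIoo R → φ s ≤ φ t)
    {t : ℝ} (ht : t ∈ DomIoo R) : Ssup φ (invMajorant R φ) t ≤ 1 / φ t :=
  Ssup_le_div fun u hu => by
    rw [invMajorant_eq hmono (Ioo_zero_subset_domIoo ht hu)]
    exact ENNReal.mul_inv_le_one _

lemma integral_inv_le_of_mul_dstar_le {g : ℝ → ℝ≥0∞} {s : ℝ} {c : ℝ≥0∞} (hs : 0 < s)
    (hφs : φ s ≠ 0) (hφs' : φ s ≠ ⊤) (hg : ∀ u ∈ Ioo 0 s, g u = 1 / φ u)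
    (hle : φ s * dstar g s ≤ c) :
    ∫⁻ u in Ioo 0 s, 1 / φ u ≤ c * (ENNReal.ofReal s / φ s) := by
  have hs0 : ENNReal.ofReal s ≠ 0 := (ENNReal.ofReal_pos.2 hs).ne'
  calc ∫⁻ u in Ioo 0 s, 1 / φ u
      = (∫⁻ u in Ioo 0 s, g u) * (φ s * (φ s)⁻¹) * (ENNReal.ofReal s * (ENNReal.ofReal s)⁻¹) := by
        rw [ENNReal.mul_inv_cancel hφs hφs', ENNReal.mul_inv_cancel hs0 ENNReal.ofReal_ne_top,
          mul_one, mul_one, setLIntegral_congr_fun measurableSet_Ioo hg]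
    _ = φ s * dstar g s * (ENNReal.ofReal s / φ s) := by
        simp only [dstar, div_eq_mul_inv]; ring
    _ ≤ c * (ENNReal.ofReal s / φ s) := by gcongr

lemma integral_inv_le_of_Ssup_dstar_le (hφ : ∀ t ∈ DomIoo R, 0 < φ t ∧ φ t < ⊤)
    (hmono : ∀ s t : ℝ, 0 ≤ s → s ≤ t → t ∈ DomIoo R → φ s ≤ φ t) {c : ℝ≥0∞}
    (hS : ∀ f : ℝ → ℝ≥0∞, NonincOn R f → ∀ t ∈ DomIoo R,
      Ssup φ (dstar f) t ≤ c * Ssup φ f t)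
    {s : ℝ} (hs : s ∈ DomIoo R) :
    ∫⁻ u in Ioo 0 s, 1 / φ u ≤ c * (ENNReal.ofReal s / φ s) := by
  obtain ⟨t, ht, hst⟩ := exists_gt_mem_domIoo hs
  have hφt := hφ t ht
  have hbound : φ s * dstar (invMajorant R φ) s * (φ t)⁻¹ ≤ c * (φ t)⁻¹ :=
    calc φ s * dstar (invMajorant R φ) s / φ t
        ≤ Ssup φ (dstar (invMajorant R φ)) t := mul_div_le_Ssup ⟨hs.1, hst⟩
      _ ≤ c * Ssup φ (invMajorant R φ) t := hS _ nonincOn_invMajorant t ht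
      _ ≤ c * (1 / φ t) := by gcongr; exact Ssup_invMajorant_le hmono ht
      _ = c * (φ t)⁻¹ := by rw [one_div]
  refine integral_inv_le_of_mul_dstar_le hs.1 (hφ s hs).1.ne' (hφ s hs).2.ne
    (fun u hu => by rw [invMajorant_eq hmono (Ioo_zero_subset_domIoo hs hu), one_div])
    ((ENNReal.mul_le_mul_iff_left (ENNReal.inv_ne_zero.2 hφt.2.ne)
      (ENNReal.inv_ne_top.2 hφt.1.ne')).1 hbound)

end Necessity

theorem statement10_general (R : ℝ≥0∞) (φ : ℝ → ℝ≥0∞)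
    (hφ : QuasiConcaveOn R φ) :
    (∃ C : ℝ, 0 < C ∧ ∀ f : ℝ → ℝ≥0∞, NonincOn R f → ∀ t ∈ DomIoo R,
        Ssup φ (dstar f) t ≤ ENNReal.ofReal C * Ssup φ f t) ↔
      BCond R φ := by
  obtain ⟨-, hφpos, hφmono, -⟩ := hφ
  constructor
  · rintro ⟨C, hC, hS⟩
    exact ⟨C, hC, fun s hs => integral_inv_le_of_Ssup_dstar_le hφpos hφmono hS hs⟩
  · rintro ⟨C, hC, hB⟩
    exact ⟨C, hC, fun f _ t ht =>
      Ssup_dstar_le_of_integral_inv_le hφpos (ENNReal.ofReal_pos.2 hC).ne' hB f ht⟩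

/-- `S_φ(f**) ≲ S_φ f` holds for all nonneg. nonincreasing `f` iff `φ ∈ B`. -/
theorem statement10 (R : ℝ≥0∞) (hR : 0 < R) (φ : ℝ → ℝ≥0∞)
    (hφ : QuasiConcaveOn R φ) :
    (∃ C : ℝ, 0 < C ∧ ∀ f : ℝ → ℝ≥0∞, NonincOn R f → ∀ t ∈ DomIoo R,
        Ssup φ (dstar f) t ≤ ENNReal.ofReal C * Ssup φ f t) ↔
      BCond R φ :=
  statement10_general R φ hφ
end
end
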